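/- If the NFA A is unambiguous and has a single accepting state q_F, then for every node n, the shortest paths from (v, q₀) to (n, q_F) in the product graph G× project bijectively onto the shortest among paths π from v to n in G with λ(π) ∈ L(A). In particular, the shortest-path distance from (v,q₀) to (n,q_F) in G× equals the minimal length of a path from v to n in G whose label is in L(A). -/
import Mathlib


/-- A labelled walk starting at a given vertex, given as its list of (label, next-vertex) steps. -/
def IsLWalk {V A : Type*} (E : V → A → V → Prop) : V → List (A × V) → Prop
  | _, [] => True
  | x, (a, y) :: rest => E x a y ∧ IsLWalk E y rest

/-- The last vertex of a labelled walk starting at `x`. -/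
def endV {V A : Type*} (x : V) (l : List (A × V)) : V := (l.getLast?).elim x Prod.snd

/-- A labelled path from `x` to `z`. -/
def IsLPath {V A : Type*} (E : V → A → V → Prop) (x z : V) (l : List (A × V)) : Prop :=
  IsLWalk E x l ∧ endV x l = z

/-- The label word of a labelled walk. -/
def labels {V A : Type*} (l : List (A × V)) : List A := l.map Prod.fst

/-- The product graph of a graph database `E` and an NFA transition relation `δ`. -/
def prodE {V A Q : Type*} (E : V → A → V → Prop) (δ : Q → A → Q → Prop) :
    V × Q → A → V × Q → Prop :=
  fun p a r => E p.1 a r.1 ∧ δ p.2 a r.2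

/-- Projection of a product-graph path to the underlying graph path (keeping labels). -/
def projPG {V A Q : Type*} : List (A × (V × Q)) → List (A × V) :=
  List.map (fun e => (e.1, e.2.1))

/-- An accepting run of the NFA `δ` with initial state `q₀` and final state `qF` on the word `w`. -/
def AccRun {A Q : Type*} (δ : Q → A → Q → Prop) (q₀ qF : Q) (w : List A) (r : List (A × Q)) :
    Prop :=
  IsLWalk δ q₀ r ∧ labels r = w ∧ endV q₀ r = qF

/-- The NFA is unambiguous: every accepted word has exactly one accepting run. -/
def Unamb {A Q : Type*} (δ : Q → A → Q → Prop) (q₀ qF : Q) : Prop :=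
  ∀ (w : List A) (r₁ r₂ : List (A × Q)), AccRun δ q₀ qF w r₁ → AccRun δ q₀ qF w r₂ → r₁ = r₂

/-- The NFA accepts the word `w`. -/
def Accepts {A Q : Type*} (δ : Q → A → Q → Prop) (q₀ qF : Q) (w : List A) : Prop :=
  ∃ r, AccRun δ q₀ qF w r

/-- The shortest-path distance (number of edges) between two vertices in a labelled graph. -/
noncomputable def ldist {V A : Type*} (E : V → A → V → Prop) (x z : V) : ℕ :=
  sInf {k | ∃ l, IsLPath E x z l ∧ l.length = k}


section Aux
variable {V A Q : Type*}

lemma endV_cons' (x y : V) (a : A) (l : List (A × V)) :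
    endV x ((a, y) :: l) = endV y l := by
  cases l with
  | nil => rfl
  | cons c t =>
      show ((c :: t).getLast?).elim x Prod.snd = ((c :: t).getLast?).elim y Prod.snd
      cases h : (c :: t).getLast? with
      | none => simp at h
      | some e => simp

/-- Projection to the NFA-run component. -/
def projQ' : List (A × (V × Q)) → List (A × Q) := List.map (fun e => (e.1, e.2.2))

lemma labels_projPG (pl : List (A × (V × Q))) : labels (projPG pl) = labels pl := by
  simp [labels, projPG, List.map_map]

lemma labels_projQ (pl : List (A × (V × Q))) : labels (projQ' pl) = labels pl := by
  simp [labels, projQ', List.map_map]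

lemma walk_projPG {E : V → A → V → Prop} {δ : Q → A → Q → Prop} :
    ∀ {pl : List (A × (V × Q))} {p : V × Q}, IsLWalk (prodE E δ) p pl →
      IsLWalk E p.1 (projPG pl)
  | [], _, _ => trivial
  | (a, r) :: t, p, h => ⟨h.1.1, walk_projPG h.2⟩

lemma walk_projQ {E : V → A → V → Prop} {δ : Q → A → Q → Prop} :
    ∀ {pl : List (A × (V × Q))} {p : V × Q}, IsLWalk (prodE E δ) p pl →
      IsLWalk δ p.2 (projQ' pl)
  | [], _, _ => trivial
  | (a, r) :: t, p, h => ⟨h.1.2, walk_projQ h.2⟩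

lemma endV_projPG : ∀ (pl : List (A × (V × Q))) (p : V × Q),
    endV p.1 (projPG pl) = (endV p pl).1
  | [], p => rfl
  | (a, r) :: t, p => by
      show endV p.1 ((a, r.1) :: projPG t) = _
      rw [endV_cons', endV_cons', endV_projPG t r]

lemma endV_projQ : ∀ (pl : List (A × (V × Q))) (p : V × Q),
    endV p.2 (projQ' pl) = (endV p pl).2
  | [], p => rfl
  | (a, r) :: t, p => by
      show endV p.2 ((a, r.2) :: projQ' t) = _
      rw [endV_cons', endV_cons', endV_projQ t r]

/-- Zip a graph path with an NFA run into a product-graph path. -/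
def zipP : List (A × V) → List (A × Q) → List (A × (V × Q))
  | (a, x) :: l, (_, q) :: r => (a, (x, q)) :: zipP l r
  | _, _ => []

lemma zipP_projPG : ∀ {l : List (A × V)} {r : List (A × Q)},
    labels l = labels r → projPG (zipP l r) = l
  | [], [], _ => rfl
  | (a, x) :: l, (b, q) :: r, h => by
      simp only [labels, List.map_cons, List.cons.injEq] at h
      show (a, x) :: projPG (zipP l r) = _
      rw [zipP_projPG h.2]

lemma zipP_projQ : ∀ {l : List (A × V)} {r : List (A × Q)},
    labels l = labels r → projQ' (zipP l r) = r
  | [], [], _ => rfl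
  | (a, x) :: l, (b, q) :: r, h => by
      simp only [labels, List.map_cons, List.cons.injEq] at h
      show (a, q) :: projQ' (zipP l r) = _
      rw [zipP_projQ h.2, h.1]

lemma zipP_proj_eq : ∀ (pl : List (A × (V × Q))), zipP (projPG pl) (projQ' pl) = pl
  | [] => rfl
  | (a, r) :: t => by
      show (a, (r.1, r.2)) :: zipP (projPG t) (projQ' t) = _
      rw [zipP_proj_eq t]

lemma zipP_walk {E : V → A → V → Prop} {δ : Q → A → Q → Prop} :
    ∀ {l : List (A × V)} {r : List (A × Q)} {x : V} {q : Q},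
      labels l = labels r → IsLWalk E x l → IsLWalk δ q r →
      IsLWalk (prodE E δ) (x, q) (zipP l r)
  | [], [], _, _, _, _, _ => trivial
  | (a, x') :: l, (b, q') :: r, x, q, h, hw, hr => by
      simp only [labels, List.map_cons, List.cons.injEq] at h
      exact ⟨⟨hw.1, h.1 ▸ hr.1⟩, zipP_walk h.2 hw.2 hr.2⟩

lemma zipP_endV : ∀ {l : List (A × V)} {r : List (A × Q)} (x : V) (q : Q),
      labels l = labels r → endV (x, q) (zipP l r) = (endV x l, endV q r)
  | [], [], _, _, _ => rfl
  | (a, x') :: l, (b, q') :: r, x, q, h => by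
      simp only [labels, List.map_cons, List.cons.injEq] at h
      show endV (x, q) ((a, (x', q')) :: zipP l r) = _
      rw [endV_cons', endV_cons', endV_cons', zipP_endV x' q' h.2]

lemma zipP_length : ∀ {l : List (A × V)} {r : List (A × Q)},
      labels l = labels r → (zipP l r).length = l.length
  | [], [], _ => rfl
  | (a, x') :: l, (b, q') :: r, h => by
      simp only [labels, List.map_cons, List.cons.injEq] at h
      show (zipP l r).length + 1 = l.length + 1
      rw [zipP_length h.2]

end Aux

/-- for an unambiguous NFA with single accepting state `q_F`, the shortest
paths from `(v,q₀)` to `(n,q_F)` in the product graph project bijectively onto the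
shortest accepted-label paths from `v` to `n` in `G`; in particular the corresponding
shortest-path lengths coincide. -/
theorem product_shortest_paths_bijective {V A Q : Type*} (E : V → A → V → Prop)
    (δ : Q → A → Q → Prop) (v : V) (q₀ qF : Q) (hU : Unamb δ q₀ qF) (n : V) :
    Set.BijOn (projPG (V := V) (A := A) (Q := Q))
      {pl : List (A × (V × Q)) | IsLPath (prodE E δ) (v, q₀) (n, qF) pl ∧
        pl.length = ldist (prodE E δ) (v, q₀) (n, qF)}
      {l : List (A × V) | IsLPath E v n l ∧ Accepts δ q₀ qF (labels l) ∧
        l.length = sInf {k | ∃ l' : List (A × V),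
          IsLPath E v n l' ∧ Accepts δ q₀ qF (labels l') ∧ l'.length = k}} ∧
    ldist (prodE E δ) (v, q₀) (n, qF)
      = sInf {k | ∃ l' : List (A × V),
          IsLPath E v n l' ∧ Accepts δ q₀ qF (labels l') ∧ l'.length = k} := by
  have hset : {k | ∃ pl, IsLPath (prodE E δ) (v, q₀) (n, qF) pl ∧ pl.length = k}
      = {k | ∃ l' : List (A × V),
          IsLPath E v n l' ∧ Accepts δ q₀ qF (labels l') ∧ l'.length = k} := by
    ext k
    constructor
    · rintro ⟨pl, ⟨hw, he⟩, hk⟩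
      refine ⟨projPG pl, ⟨walk_projPG hw, ?_⟩,
        ⟨projQ' pl, walk_projQ hw, ?_, ?_⟩, by simpa [projPG] using hk⟩
      · rw [endV_projPG pl (v, q₀), he]
      · rw [labels_projQ, labels_projPG]
      · rw [endV_projQ pl (v, q₀), he]
    · rintro ⟨l, ⟨hw, he⟩, ⟨r, hrw, hrl, hre⟩, hk⟩
      have hlab : labels l = labels r := hrl.symm
      refine ⟨zipP l r, ⟨zipP_walk hlab hw hrw, ?_⟩, by rw [zipP_length hlab, hk]⟩
      rw [zipP_endV v q₀ hlab, he, hre]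
  have hdist : ldist (prodE E δ) (v, q₀) (n, qF)
      = sInf {k | ∃ l' : List (A × V),
          IsLPath E v n l' ∧ Accepts δ q₀ qF (labels l') ∧ l'.length = k} := by
    rw [ldist, hset]
  refine ⟨⟨?_, ?_, ?_⟩, hdist⟩
  · rintro pl ⟨⟨hw, he⟩, hk⟩
    refine ⟨⟨walk_projPG hw, ?_⟩, ⟨projQ' pl, walk_projQ hw, ?_, ?_⟩, ?_⟩
    · rw [endV_projPG pl (v, q₀), he]
    · rw [labels_projQ, labels_projPG]
    · rw [endV_projQ pl (v, q₀), he]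
    · show (projPG pl).length = _
      rw [← hdist, ← hk]; simp [projPG]
  · rintro pl₁ ⟨⟨hw₁, he₁⟩, -⟩ pl₂ ⟨⟨hw₂, he₂⟩, -⟩ hproj
    have hlab : labels pl₂ = labels pl₁ := by
      rw [← labels_projPG pl₁, ← labels_projPG pl₂, hproj]
    have hrun : ∀ (pl : List (A × (V × Q))), IsLWalk (prodE E δ) (v, q₀) pl →
        endV (v, q₀) pl = (n, qF) → AccRun δ q₀ qF (labels pl) (projQ' pl) := by
      intro pl hw he
      exact ⟨walk_projQ hw, labels_projQ pl, by rw [endV_projQ pl (v, q₀), he]⟩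
    have hq : projQ' pl₁ = projQ' pl₂ :=
      hU (labels pl₁) _ _ (hrun pl₁ hw₁ he₁) (hlab ▸ hrun pl₂ hw₂ he₂)
    rw [← zipP_proj_eq pl₁, ← zipP_proj_eq pl₂, hproj, hq]
  · rintro l ⟨⟨hw, he⟩, ⟨r, hrw, hrl, hre⟩, hk⟩
    have hlab : labels l = labels r := hrl.symm
    refine ⟨zipP l r, ⟨⟨zipP_walk hlab hw hrw, ?_⟩, ?_⟩, zipP_projPG hlab⟩
    · rw [zipP_endV v q₀ hlab, he, hre]
    · rw [zipP_length hlab, hk, hdist]
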